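/- arXiv:1611.05284 — 7 statements merged into one kernel-verified Lean document; each statement's English description precedes it below -/
import Mathlib

section
/- Let X be a proper metric space, F: X → Y an L-Lipschitz quotient mapping (i.e., B(F(x), r/L) ⊆ F(B(x,r)) ⊆ B(F(x), Lr) for all x and r > 0), and γ: [0,T] → Y a 1-Lipschitz curve with γ(0) = F(x). Then there exists an L-Lipschitz curve γ̃: [0,T] → X with γ̃(0) = x and F ∘ γ̃ = γ. -/
/-!
Since `X` is proper and the fibres of `F` are closed, every point `p` has a lift of any `y` at
distance at most `L · dist y (F p)`. Lifting `γ` at the grid points `k δ` one step at a time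
gives step functions that are `L`-Lipschitz up to an error `L δ` and lift `γ` up to `δ`.
They stay in a fixed compact ball, so along an ultrafilter on the meshes `δ → 0` they converge
pointwise, and the pointwise limit is an exact `L`-Lipschitz lift.
-/

/-- `F : X → Y` is an `L`-Lipschitz quotient mapping:
`B(F x, r/L) ⊆ F(B(x,r)) ⊆ B(F x, L·r)` for all `x` and `r > 0`. -/
def IsLQ {X Y : Type*} [MetricSpace X] [MetricSpace Y] (L : ℝ) (F : X → Y) : Prop :=
  ∀ (x : X) (r : ℝ), 0 < r →
    Metric.ball (F x) (r / L) ⊆ F '' Metric.ball x r ∧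
    F '' Metric.ball x r ⊆ Metric.ball (F x) (L * r)

open Metric Set Filter Topology

theorem dist_le_mul_of_dist_succ_le {X : Type*} [PseudoMetricSpace X] {f : ℕ → X} {c : ℝ}
    (h : ∀ k, dist (f k) (f (k + 1)) ≤ c) {m n : ℕ} (hmn : m ≤ n) :
    dist (f m) (f n) ≤ (n - m : ℕ) * c := by
  calc dist (f m) (f n) ≤ ∑ k ∈ Finset.Ico m n, dist (f k) (f (k + 1)) := dist_le_Ico_sum_dist f hmn
    _ ≤ (Finset.Ico m n).card • c := Finset.sum_le_card_nsmul _ _ _ fun k _ => h k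
    _ = (n - m : ℕ) * c := by rw [Nat.card_Ico, nsmul_eq_mul]

theorem natFloor_div_sub_natFloor_div_mul_le {s t δ : ℝ} (hs : 0 ≤ s) (hst : s ≤ t) (hδ : 0 < δ) :
    ((⌊t / δ⌋₊ - ⌊s / δ⌋₊ : ℕ) : ℝ) * δ ≤ t - s + δ := by
  have hdist_of_le : ⌊s / δ⌋₊ ≤ ⌊t / δ⌋₊ := Nat.floor_mono (by gcongr)
  have ht : (⌊t / δ⌋₊ : ℝ) ≤ t / δ := Nat.floor_le (div_nonneg (hs.trans hst) hδ.le)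
  have hs' : s / δ < ⌊s / δ⌋₊ + 1 := Nat.lt_floor_add_one _
  have hcount : ((⌊t / δ⌋₊ - ⌊s / δ⌋₊ : ℕ) : ℝ) ≤ (t - s + δ) / δ := by
    rw [Nat.cast_sub hdist_of_le, add_div, div_self hδ.ne', sub_div]
    linarith
  rwa [le_div_iff₀ hδ] at hcount

theorem dist_comp_natFloor_div_le {X : Type*} [PseudoMetricSpace X] {f : ℕ → X} {c δ s t : ℝ}
    (hc : 0 ≤ c) (hδ : 0 < δ) (hstep : ∀ k, dist (f k) (f (k + 1)) ≤ c * δ) (hs : 0 ≤ s)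
    (hst : s ≤ t) : dist (f ⌊s / δ⌋₊) (f ⌊t / δ⌋₊) ≤ c * (t - s + δ) :=
  calc dist (f ⌊s / δ⌋₊) (f ⌊t / δ⌋₊) ≤ ((⌊t / δ⌋₊ - ⌊s / δ⌋₊ : ℕ) : ℝ) * (c * δ) :=
        dist_le_mul_of_dist_succ_le hstep (Nat.floor_mono (by gcongr))
    _ = c * (((⌊t / δ⌋₊ - ⌊s / δ⌋₊ : ℕ) : ℝ) * δ) := by ring
    _ ≤ c * (t - s + δ) := by
        gcongr
        exact natFloor_div_sub_natFloor_div_mul_le hs hst hδ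

theorem exists_forall_tendsto_of_mapsTo_isCompact {ι α X : Type*} [TopologicalSpace X] [Nonempty X]
    {s : Set α} {K : Set X} (hK : IsCompact K) {g : ι → α → X} (hg : ∀ i, MapsTo (g i) s K)
    (U : Ultrafilter ι) : ∃ h : α → X, ∀ a ∈ s, Tendsto (fun i => g i a) U (𝓝 (h a)) := by
  refine ⟨fun a => limUnder U fun i => g i a, fun a ha => tendsto_nhds_limUnder ?_⟩
  obtain ⟨b, -, hb⟩ := hK.ultrafilter_le_nhds (U.map fun i => g i a)
    (tendsto_principal.2 (Eventually.of_forall fun i => hg i ha))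
  exact ⟨b, hb⟩

namespace IsLQ

variable {X Y : Type*} [MetricSpace X] [MetricSpace Y] {L : ℝ} {F : X → Y}

theorem pos (hF : IsLQ L F) (x : X) : 0 < L := by
  have h := (hF x 1 one_pos).2 (mem_image_of_mem F (mem_ball_self one_pos))
  rw [mem_ball, dist_self] at h
  simpa using h

theorem dist_le (hF : IsLQ L F) (a b : X) : dist (F a) (F b) ≤ L * dist a b := by
  have hL := hF.pos a
  refine le_of_forall_pos_lt_add fun ε hε => ?_
  have hr : 0 < dist a b + ε / L := by positivity
  have hb : b ∈ ball a (dist a b + ε / L) := by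
    rw [mem_ball, dist_comm]
    linarith [div_pos hε hL]
  have hFb := (hF a _ hr).2 (mem_image_of_mem F hb)
  rw [mem_ball, dist_comm] at hFb
  calc dist (F a) (F b) < L * (dist a b + ε / L) := hFb
    _ = L * dist a b + ε := by rw [mul_add, mul_div_cancel₀ _ hL.ne']

theorem continuous (hF : IsLQ L F) : Continuous F :=
  (LipschitzWith.of_dist_le_mul (K := Real.toNNReal L) fun a b => by
    rw [Real.coe_toNNReal L (hF.pos a).le]
    exact hF.dist_le a b).continuous

theorem exists_lift_dist_le [ProperSpace X] (hF : IsLQ L F) (p : X) (y : Y) :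
    ∃ q, F q = y ∧ dist p q ≤ L * dist y (F p) := by
  have hL := hF.pos p
  have hlift : ∀ ε > 0, ∃ q, F q = y ∧ dist p q < L * (dist y (F p) + ε) := by
    intro ε hε
    have hr : 0 < L * (dist y (F p) + ε) := by positivity
    have hy : y ∈ ball (F p) (L * (dist y (F p) + ε) / L) := by
      rw [mul_div_cancel_left₀ _ hL.ne', mem_ball]
      linarith
    obtain ⟨q, hq, rfl⟩ := (hF p _ hr).1 hy
    exact ⟨q, rfl, by rwa [mem_ball, dist_comm] at hq⟩
  obtain ⟨q₀, hq₀, -⟩ := hlift 1 one_pos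
  obtain ⟨q, hq, hdist⟩ :=
    (isClosed_singleton.preimage hF.continuous).exists_infDist_eq_dist ⟨q₀, hq₀⟩ p
  refine ⟨q, hq, hdist ▸ le_of_forall_pos_lt_add fun ε hε => ?_⟩
  obtain ⟨q', hq', hlt⟩ := hlift (ε / L) (div_pos hε hL)
  calc infDist p (F ⁻¹' {y}) ≤ dist p q' := infDist_le_dist_of_mem hq'
    _ < L * (dist y (F p) + ε / L) := hlt
    _ = L * dist y (F p) + ε := by rw [mul_add, mul_div_cancel₀ _ hL.ne']

theorem exists_lift_seq [ProperSpace X] (hF : IsLQ L F) (y : ℕ → Y) (x : X) (hx : F x = y 0) :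
    ∃ f : ℕ → X, f 0 = x ∧ (∀ k, F (f k) = y k) ∧
      ∀ k, dist (f k) (f (k + 1)) ≤ L * dist (y (k + 1)) (y k) := by
  choose next hnextF hnext using hF.exists_lift_dist_le
  let f : ℕ → X := fun k => Nat.rec x (fun k p => next p (y (k + 1))) k
  have hfF : ∀ k, F (f k) = y k := by
    intro k
    induction k with
    | zero => exact hx
    | succ k _ => exact hnextF _ _
  refine ⟨f, rfl, hfF, fun k => ?_⟩
  simpa only [hfF k] using hnext (f k) (y (k + 1))

theorem exists_approx_lift [ProperSpace X] (hF : IsLQ L F) (x : X) {T : ℝ} (hT : 0 ≤ T)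
    (γ : ℝ → Y) (hγ : ∀ s ∈ Icc 0 T, ∀ t ∈ Icc 0 T, dist (γ s) (γ t) ≤ dist s t)
    (hγ0 : γ 0 = F x) {δ : ℝ} (hδ : 0 < δ) :
    ∃ g : ℝ → X, g 0 = x ∧
      (∀ s ∈ Icc 0 T, ∀ t ∈ Icc 0 T, dist (g s) (g t) ≤ L * (dist s t + δ)) ∧
      ∀ t ∈ Icc 0 T, dist (F (g t)) (γ t) ≤ δ := by
  have hL := hF.pos x
  set τ : ℕ → Icc 0 T := fun k => projIcc 0 T hT (k * δ)
  have hτ : ∀ k, dist (γ (τ (k + 1))) (γ (τ k)) ≤ δ := fun k =>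
    calc dist (γ (τ (k + 1))) (γ (τ k)) ≤ |(τ (k + 1) : ℝ) - τ k| :=
          hγ _ (τ (k + 1)).2 _ (τ k).2
      _ ≤ |((k + 1 : ℕ) : ℝ) * δ - k * δ| := abs_projIcc_sub_projIcc hT
      _ = δ := by push_cast; rw [add_mul, one_mul, add_sub_cancel_left, abs_of_pos hδ]
  obtain ⟨f, hf0, hfF, hfstep⟩ :=
    hF.exists_lift_seq (fun k => γ (τ k)) x (by simp [τ, projIcc_left, hγ0])
  have hstep : ∀ k, dist (f k) (f (k + 1)) ≤ L * δ := fun k =>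
    (hfstep k).trans (mul_le_mul_of_nonneg_left (hτ k) hL.le)
  have hdist_of_le : ∀ s ∈ Icc 0 T, ∀ t, s ≤ t →
      dist (f ⌊s / δ⌋₊) (f ⌊t / δ⌋₊) ≤ L * (dist s t + δ) := by
    intro s hs t hst
    rw [Real.dist_eq, abs_sub_comm, abs_of_nonneg (sub_nonneg.2 hst)]
    exact dist_comp_natFloor_div_le hL.le hδ hstep hs.1 hst
  refine ⟨fun t => f ⌊t / δ⌋₊, by simpa using hf0, fun s hs t ht => ?_, fun t ht => ?_⟩
  · rcases le_total s t with hst | hts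
    · exact hdist_of_le s hs t hst
    · rw [dist_comm, dist_comm s]
      exact hdist_of_le t ht s hts
  · have hlow : (⌊t / δ⌋₊ : ℝ) * δ ≤ t :=
      (le_div_iff₀ hδ).1 (Nat.floor_le (div_nonneg ht.1 hδ.le))
    have hhigh : t < (⌊t / δ⌋₊ + 1 : ℝ) * δ := (div_lt_iff₀ hδ).1 (Nat.lt_floor_add_one _)
    have hmem : (⌊t / δ⌋₊ : ℝ) * δ ∈ Icc 0 T := ⟨by positivity, hlow.trans ht.2⟩
    have hgrid : F (f ⌊t / δ⌋₊) = γ ((⌊t / δ⌋₊ : ℝ) * δ) := by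
      simp only [hfF, τ, projIcc_of_mem hT hmem]
    rw [hgrid]
    refine (hγ _ hmem _ ht).trans ?_
    rw [Real.dist_eq, abs_sub_comm, abs_of_nonneg (by linarith)]
    linarith

end IsLQ

theorem stmt0_general {X Y : Type*} [MetricSpace X] [MetricSpace Y] [ProperSpace X]
    (L : ℝ) (F : X → Y) (hF : IsLQ L F)
    (x : X) (T : ℝ) (hT : 0 ≤ T) (γ : ℝ → Y)
    (hγ : ∀ s ∈ Set.Icc 0 T, ∀ t ∈ Set.Icc 0 T, dist (γ s) (γ t) ≤ dist s t)
    (hγ0 : γ 0 = F x) :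
    ∃ γ' : ℝ → X,
      (∀ s ∈ Set.Icc 0 T, ∀ t ∈ Set.Icc 0 T, dist (γ' s) (γ' t) ≤ L * dist s t) ∧
      γ' 0 = x ∧ ∀ t ∈ Set.Icc 0 T, F (γ' t) = γ t := by
  have hL := hF.pos x
  have : Nonempty X := ⟨x⟩
  set δ : ℕ → ℝ := fun n => 1 / (n + 1)
  choose g hg0 hgLip hgF using fun n => hF.exists_approx_lift x hT γ hγ hγ0 (δ := δ n)
    Nat.one_div_pos_of_nat
  let U := Ultrafilter.of (atTop : Filter ℕ)
  have hδ : Tendsto δ U (𝓝 0) :=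
    tendsto_one_div_add_atTop_nhds_zero_nat.mono_left (Ultrafilter.of_le _)
  have hbound : ∀ n, MapsTo (g n) (Icc 0 T) (closedBall x (L * (T + 1))) := fun n t ht => by
    have hδ1 : δ n ≤ 1 := (div_le_one (by positivity)).2 (by simp)
    rw [mem_closedBall, ← hg0 n]
    calc dist (g n t) (g n 0) ≤ L * (dist t 0 + δ n) := hgLip n t ht 0 ⟨le_rfl, hT⟩
      _ ≤ L * (T + 1) := by
          rw [Real.dist_eq, sub_zero, abs_of_nonneg ht.1]
          gcongr
          exact ht.2
  obtain ⟨γ', hγ'⟩ := exists_forall_tendsto_of_mapsTo_isCompact (isCompact_closedBall x _) hbound U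
  refine ⟨γ', fun s hs t ht => ?_, ?_, fun t ht => ?_⟩
  · refine le_of_tendsto_of_tendsto' ((hγ' s hs).dist (hγ' t ht)) ?_ fun n => hgLip n s hs t ht
    simpa using (tendsto_const_nhds.add hδ).const_mul L
  · refine tendsto_nhds_unique (hγ' 0 ⟨le_rfl, hT⟩) ?_
    simp only [hg0]
    exact tendsto_const_nhds
  · refine tendsto_nhds_unique ((hF.continuous.tendsto _).comp (hγ' t ht)) ?_
    exact tendsto_iff_dist_tendsto_zero.2
      (squeeze_zero (fun n => dist_nonneg) (fun n => hgF n t ht) hδ)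

/-- Path lifting for Lipschitz quotient maps on proper spaces. -/
theorem stmt0 {X Y : Type*} [MetricSpace X] [MetricSpace Y] [ProperSpace X]
    (L : ℝ) (hL : 1 ≤ L) (F : X → Y) (hF : IsLQ L F)
    (x : X) (T : ℝ) (hT : 0 ≤ T) (γ : ℝ → Y)
    (hγ : ∀ s ∈ Set.Icc 0 T, ∀ t ∈ Set.Icc 0 T, dist (γ s) (γ t) ≤ dist s t)
    (hγ0 : γ 0 = F x) :
    ∃ γ' : ℝ → X,
      (∀ s ∈ Set.Icc 0 T, ∀ t ∈ Set.Icc 0 T, dist (γ' s) (γ' t) ≤ L * dist s t) ∧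
      γ' 0 = x ∧ ∀ t ∈ Set.Icc 0 T, F (γ' t) = γ t :=
  stmt0_general L F hF x T hT γ hγ hγ0
end

section
/- Let X be a proper metric space, Y a geodesic metric space, and F: X → Y an L-Lipschitz quotient mapping. If F is injective on the ball B(x, r) for some x ∈ X and r > 0, then F is L-bilipschitz on the ball B(x, r/(1+2L²)), i.e., d(p,q) ≤ L·d(F(p), F(q)) and d(F(p),F(q)) ≤ L·d(p,q) for all p, q in that ball. -/
/-- An injective Lipschitz quotient map on a ball is bilipschitz on a smaller ball. -/
theorem stmt1 {X Y : Type*} [MetricSpace X] [MetricSpace Y] [ProperSpace X]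
    (hgeo : ∀ a b : Y, ∃ γ : ℝ → Y, γ 0 = a ∧ γ (dist a b) = b ∧
      ∀ s ∈ Set.Icc 0 (dist a b), ∀ t ∈ Set.Icc 0 (dist a b), dist (γ s) (γ t) = |s - t|)
    (L : ℝ) (hL : 1 ≤ L) (F : X → Y) (hF : IsLQ L F)
    (x : X) (r : ℝ) (hr : 0 < r) (hinj : Set.InjOn F (Metric.ball x r)) :
    ∀ p ∈ Metric.ball x (r / (1 + 2 * L ^ 2)), ∀ q ∈ Metric.ball x (r / (1 + 2 * L ^ 2)),
      dist p q ≤ L * dist (F p) (F q) ∧ dist (F p) (F q) ≤ L * dist p q := by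
  have hL0 : (0:ℝ) < L := by linarith
  -- F satisfies the global upper Lipschitz bound
  have hlip : ∀ a b : X, dist (F a) (F b) ≤ L * dist a b := by
    intro a b
    refine le_of_forall_pos_le_add ?_
    intro ε hε
    have hε' : 0 < ε / L := div_pos hε hL0
    have hb : b ∈ Metric.ball a (dist a b + ε / L) := by
      rw [Metric.mem_ball, dist_comm]
      linarith
    have h2 := (hF a (dist a b + ε / L) (by positivity)).2 ⟨b, hb, rfl⟩
    rw [Metric.mem_ball] at h2
    rw [mul_add, mul_div_cancel₀ ε (ne_of_gt hL0)] at h2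
    rw [dist_comm]
    linarith
  have hcont : Continuous F := by
    have hlw : LipschitzWith L.toNNReal F := by
      apply LipschitzWith.of_dist_le_mul
      intro a b
      rw [Real.coe_toNNReal L (by linarith)]
      exact hlip a b
    exact hlw.continuous
  have hc0 : (0:ℝ) < 1 + 2 * L ^ 2 := by nlinarith
  intro p hp q hq
  rw [Metric.mem_ball] at hp hq
  set d := dist (F p) (F q) with hd
  have hub : d ≤ L * dist p q := hlip p q
  have hd0 : 0 ≤ d := dist_nonneg
  -- dist p q bound
  have hpq : dist p q < 2 * (r / (1 + 2 * L ^ 2)) := by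
    calc dist p q ≤ dist p x + dist x q := dist_triangle p x q
    _ < 2 * (r / (1 + 2 * L ^ 2)) := by rw [dist_comm x q]; linarith
  refine ⟨?_, hub⟩
  -- find a preimage z₀ of F q with dist p z₀ ≤ L * d, via a minimizer
  have hKc : IsCompact (Metric.closedBall p (L * d + 1) ∩ F ⁻¹' {F q}) :=
    (isCompact_closedBall p _).inter_right (isClosed_singleton.preimage hcont)
  have hKne : (Metric.closedBall p (L * d + 1) ∩ F ⁻¹' {F q}).Nonempty := by
    have hmem : F q ∈ Metric.ball (F p) ((L * d + 1) / L) := by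
      rw [Metric.mem_ball, dist_comm, ← hd, lt_div_iff₀ hL0]
      nlinarith
    obtain ⟨z, hz, hfz⟩ := (hF p (L * d + 1) (by positivity)).1 hmem
    exact ⟨z, Metric.ball_subset_closedBall hz, by simpa using hfz⟩
  obtain ⟨z₀, hz₀K, hz₀min⟩ := hKc.exists_isMinOn hKne
    ((continuous_const.dist continuous_id).continuousOn :
      ContinuousOn (fun z => dist p z) _)
  have hz₀f : F z₀ = F q := hz₀K.2
  have hz₀d : dist p z₀ ≤ L * d := by
    by_contra hcon
    push_neg at hcon
    set ρ := (L * d + dist p z₀) / 2 with hρ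
    have hLd : 0 ≤ L * d := mul_nonneg hL0.le hd0
    have hρpos : 0 < ρ := by rw [hρ]; linarith
    have hρlt : ρ < dist p z₀ := by rw [hρ]; linarith
    have hmem : F q ∈ Metric.ball (F p) (ρ / L) := by
      rw [Metric.mem_ball, dist_comm, ← hd, lt_div_iff₀ hL0]
      nlinarith
    obtain ⟨z, hz, hfz⟩ := (hF p ρ hρpos).1 hmem
    rw [Metric.mem_ball, dist_comm z p] at hz
    have hzK : z ∈ Metric.closedBall p (L * d + 1) ∩ F ⁻¹' {F q} := by
      refine ⟨Metric.mem_closedBall.2 ?_, by simpa using hfz⟩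
      have hzb := hz₀K.1
      rw [Metric.mem_closedBall, dist_comm z₀ p] at hzb
      rw [dist_comm z p]
      linarith
    have hmin := hz₀min hzK
    simp only [id, Set.mem_setOf_eq] at hmin
    linarith
  -- z₀ is in the big ball, as is q, so injectivity gives z₀ = q
  have hz₀ball : z₀ ∈ Metric.ball x r := by
    rw [Metric.mem_ball]
    calc dist z₀ x ≤ dist z₀ p + dist p x := dist_triangle z₀ p x
    _ = dist p z₀ + dist p x := by rw [dist_comm z₀ p]
    _ ≤ L * d + dist p x := by linarith
    _ ≤ L * (L * dist p q) + dist p x := by nlinarith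
    _ < L * (L * (2 * (r / (1 + 2 * L ^ 2)))) + r / (1 + 2 * L ^ 2) := by
        nlinarith [sq_nonneg L]
    _ = (2 * L ^ 2 + 1) * (r / (1 + 2 * L ^ 2)) := by ring
    _ = r := by field_simp; ring
  have hqball : q ∈ Metric.ball x r := by
    rw [Metric.mem_ball]
    have : r / (1 + 2 * L ^ 2) ≤ r := by
      rw [div_le_iff₀ hc0]; nlinarith
    linarith
  have : z₀ = q := hinj hz₀ball hqball hz₀f
  rw [← this]
  exact hz₀d
end

section
/- Let π: ℝⁿ → ℝ² (n > 2) be the projection onto the first two coordinates, and let φ̂: X̂ → ℝⁿ be an L-Lipschitz quotient mapping from a metric space X̂ onto ℝⁿ. If π ∘ φ̂ is injective on some ball B(x̂, t) with t > 0, then φ̂(B(x̂, t)) contains no open ball of ℝⁿ, contradicting the Lipschitz quotient property; hence π ∘ φ̂ cannot be injective on any ball if φ̂ is a Lipschitz quotient mapping onto ℝⁿ with n > 2. -/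
theorem IsLQ.pos_s4 {X Y : Type*} [MetricSpace X] [MetricSpace Y] {L : ℝ} {F : X → Y}
    (hF : IsLQ L F) (x : X) : 0 < L := by
  have hx : F x ∈ Metric.ball (F x) (L * 1) :=
    (hF x 1 one_pos).2 ⟨x, Metric.mem_ball_self one_pos, rfl⟩
  simpa using Metric.pos_of_mem_ball hx

theorem IsLQ.injOn_ball_of_injOn_comp {X Y Z : Type*} [MetricSpace X] [MetricSpace Y]
    {L : ℝ} {F : X → Y} (hF : IsLQ L F) {g : Y → Z} {x : X} {t : ℝ} (ht : 0 < t)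
    (hinj : Set.InjOn (g ∘ F) (Metric.ball x t)) : Set.InjOn g (Metric.ball (F x) (t / L)) :=
  hinj.image_of_comp.mono (hF x t ht).1

theorem not_injOn_ball_of_forall_add_smul {E Z : Type*} [NormedAddCommGroup E] [NormedSpace ℝ E]
    {g : E → Z} {w : E} (hw : w ≠ 0) (hg : ∀ v (c : ℝ), g (v + c • w) = g v) (y : E) {r : ℝ}
    (hr : 0 < r) : ¬ Set.InjOn g (Metric.ball y r) := by
  intro hinj
  have hw' : 0 < ‖w‖ := norm_pos_iff.mpr hw
  set c : ℝ := r / (2 * ‖w‖)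
  have hc : 0 < c := by positivity
  have hmem : y + c • w ∈ Metric.ball y r := by
    rw [Metric.mem_ball, dist_self_add_left, norm_smul, Real.norm_of_nonneg hc.le]
    calc c * ‖w‖ = r / 2 := by simp only [c]; field_simp
      _ < r := half_lt_self hr
  have heq : y + c • w = y := hinj hmem (Metric.mem_ball_self hr) (hg y c)
  exact smul_ne_zero hc.ne' hw (by simpa using heq)

theorem stmt4_general {X : Type*} [MetricSpace X] (n : ℕ) (hn : 2 < n)
    (L : ℝ)
    (φ : X → EuclideanSpace ℝ (Fin n)) (hφ : IsLQ L φ)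
    (π : EuclideanSpace ℝ (Fin n) → EuclideanSpace ℝ (Fin 2))
    (hπ : ∀ (v : EuclideanSpace ℝ (Fin n)) (i : Fin 2), π v i = v (Fin.castLE hn.le i)) :
    ¬ ∃ (x : X) (t : ℝ), 0 < t ∧ Set.InjOn (π ∘ φ) (Metric.ball x t) := by
  rintro ⟨x, t, ht, hinj⟩
  have hπ_inv : ∀ v (c : ℝ), π (v + c • EuclideanSpace.single ⟨2, hn⟩ 1) = π v := by
    intro v c
    ext i
    have hi : Fin.castLE hn.le i ≠ ⟨2, hn⟩ := by simp [Fin.ext_iff]; omega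
    simp [hπ, hi]
  exact not_injOn_ball_of_forall_add_smul (by simp) hπ_inv (φ x) (div_pos ht (hφ.pos_s4 x))
    (hφ.injOn_ball_of_injOn_comp ht hinj)

/-- If `φ : X → ℝⁿ` with `n > 2` is a Lipschitz quotient mapping and `π : ℝⁿ → ℝ²` is the
projection onto the first two coordinates, then `π ∘ φ` is not injective on any ball. -/
theorem stmt4 {X : Type*} [MetricSpace X] (n : ℕ) (hn : 2 < n)
    (L : ℝ) (hL : 1 ≤ L)
    (φ : X → EuclideanSpace ℝ (Fin n)) (hφ : IsLQ L φ)
    (π : EuclideanSpace ℝ (Fin n) → EuclideanSpace ℝ (Fin 2))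
    (hπ : ∀ (v : EuclideanSpace ℝ (Fin n)) (i : Fin 2), π v i = v (Fin.castLE hn.le i)) :
    ¬ ∃ (x : X) (t : ℝ), 0 < t ∧ Set.InjOn (π ∘ φ) (Metric.ball x t) :=
  stmt4_general n hn L φ hφ π hπ
end

section
/- Let F: X → ℝⁿ be an L-Lipschitz quotient mapping from a proper metric space X such that the preimage of every point is finite. Then F is a proper mapping, i.e., F⁻¹(K) is compact in X for every compact K ⊆ ℝⁿ. -/
/-- A Lipschitz quotient map from a proper space to `ℝⁿ` with finite fibers is a proper map. -/
theorem stmt6 {X : Type*} [MetricSpace X] [ProperSpace X] (n : ℕ)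
    (L : ℝ) (hL : 1 ≤ L) (F : X → EuclideanSpace ℝ (Fin n)) (hF : IsLQ L F)
    (hfin : ∀ y : EuclideanSpace ℝ (Fin n), (F ⁻¹' {y}).Finite) :
    ∀ K : Set (EuclideanSpace ℝ (Fin n)), IsCompact K → IsCompact (F ⁻¹' K) := by
  have hL0 : (0:ℝ) < L := zero_lt_one.trans_le hL
  -- F is continuous
  have hcont : Continuous F := by
    rw [Metric.continuous_iff]
    intro b ε hε
    refine ⟨ε / L, by positivity, fun a ha => ?_⟩
    have h := (hF b (ε / L) (by positivity)).2 ⟨a, Metric.mem_ball.mpr ha, rfl⟩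
    have h' : dist (F a) (F b) < L * (ε / L) := Metric.mem_ball.mp h
    rwa [mul_div_cancel₀ _ hL0.ne'] at h'
  intro K hK
  obtain ⟨R, hR0, hKR⟩ := hK.isBounded.subset_closedBall_lt 0 0
  set r : ℝ := L * R + 1 with hrdef
  have hr : 0 < r := by positivity
  have key : F ⁻¹' K ⊆ ⋃ z ∈ F ⁻¹' {(0 : EuclideanSpace ℝ (Fin n))}, Metric.ball z r := by
    intro x hx
    have hdist : dist (F x) 0 ≤ R := Metric.mem_closedBall.mp (hKR hx)
    have h0 : (0 : EuclideanSpace ℝ (Fin n)) ∈ Metric.ball (F x) (r / L) := by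
      rw [Metric.mem_ball, dist_comm]
      calc dist (F x) 0 ≤ R := hdist
        _ < r / L := by rw [lt_div_iff₀ hL0]; nlinarith
    obtain ⟨z, hz, hz0⟩ := (hF x r hr).1 h0
    exact Set.mem_biUnion (by simpa using hz0)
      (Metric.mem_ball.mpr (by rw [dist_comm]; exact Metric.mem_ball.mp hz))
  have hbd : Bornology.IsBounded (F ⁻¹' K) :=
    ((Bornology.isBounded_biUnion (hfin 0)).2 fun z _ => Metric.isBounded_ball).subset key
  exact Metric.isCompact_of_isClosed_isBounded (hK.isClosed.preimage hcont) hbd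
end

section
/- Let (M,p,φ) and (N,q,ψ) be triples of pointed metric spaces with real-valued Lipschitz functions that are ε-close at scale t (for ε ∈ (0,1/10)), witnessed by maps f, g. Fix λ ∈ (0, 1/2]. If B(x, λt) ⊆ B(p, t), then (M,x,φ) and (N,f(x),ψ) are (ε/λ)-close at scale λt. -/
open Metric

/-- The triples `(M,p,φ)` and `(N,q,ψ)` are `ε`-close at scale `t`, witnessed by the
`εt`-isometries `f` and `g`. -/
def CloseWith {M N : Type*} [MetricSpace M] [MetricSpace N] {k : ℕ}
    (ε t : ℝ) (p : M) (φ : M → EuclideanSpace ℝ (Fin k))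
    (q : N) (ψ : N → EuclideanSpace ℝ (Fin k)) (f : M → N) (g : N → M) : Prop :=
  (∀ x ∈ ball p (t / ε), ∀ y ∈ ball p (t / ε), |dist (f x) (f y) - dist x y| ≤ ε * t) ∧
  (∀ x ∈ ball q (t / ε), ∀ y ∈ ball q (t / ε), |dist (g x) (g y) - dist x y| ≤ ε * t) ∧
  dist (f p) q ≤ ε * t ∧ dist (g q) p ≤ ε * t ∧
  (∀ y ∈ ball q (t / (2 * ε)), dist (f (g y)) y ≤ ε * t) ∧
  (∀ x ∈ ball p (t / (2 * ε)), dist (g (f x)) x ≤ ε * t) ∧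
  (∀ y ∈ ball q (t / ε), dist (φ (g y)) (ψ y) ≤ ε * t) ∧
  (∀ x ∈ ball p (t / ε), dist (ψ (f x)) (φ x) ≤ ε * t)

/-- The triples `(M,p,φ)` and `(N,q,ψ)` are `ε`-close at scale `t`. -/
def Close {M N : Type*} [MetricSpace M] [MetricSpace N] {k : ℕ}
    (ε t : ℝ) (p : M) (φ : M → EuclideanSpace ℝ (Fin k))
    (q : N) (ψ : N → EuclideanSpace ℝ (Fin k)) : Prop :=
  ∃ f g, CloseWith ε t p φ q ψ f g

namespace CloseWith

variable {M N : Type*} [MetricSpace M] [MetricSpace N] {k : ℕ} {ε t : ℝ} {p : M}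
  {φ : M → EuclideanSpace ℝ (Fin k)} {q : N} {ψ : N → EuclideanSpace ℝ (Fin k)}
  {f : M → N} {g : N → M}

theorem dist_map_basepoint_le (h : CloseWith ε t p φ q ψ f g) (ht : 0 < t / ε) {x : M}
    (hx : x ∈ ball p (t / ε)) : dist (f x) q ≤ dist x p + 2 * (ε * t) := by
  have hfx := (abs_le.mp (h.1 x hx p (mem_ball_self ht))).2
  linarith [dist_triangle (f x) (f p) q, h.2.2.1]

theorem of_ball_subset (h : CloseWith ε t p φ q ψ f g) {ε' t' : ℝ} {p' : M} {q' : N}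
    (het : ε' * t' = ε * t)
    (hp : ball p' (t' / ε') ⊆ ball p (t / ε)) (hq : ball q' (t' / ε') ⊆ ball q (t / ε))
    (hp₂ : ball p' (t' / (2 * ε')) ⊆ ball p (t / (2 * ε)))
    (hq₂ : ball q' (t' / (2 * ε')) ⊆ ball q (t / (2 * ε)))
    (hfp : dist (f p') q' ≤ ε * t) (hgq : dist (g q') p' ≤ ε * t) :
    CloseWith ε' t' p' φ q' ψ f g := by
  obtain ⟨hf, hg, -, -, hfg, hgf, hφ, hψ⟩ := h
  rw [CloseWith, het]
  exact ⟨fun a ha b hb => hf a (hp ha) b (hp hb), fun a ha b hb => hg a (hq ha) b (hq hb),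
    hfp, hgq, fun y hy => hfg y (hq₂ hy), fun a ha => hgf a (hp₂ ha),
    fun y hy => hφ y (hq hy), fun a ha => hψ a (hp ha)⟩

end CloseWith

/-- Recentering closeness: if `(M,p,φ)` and `(N,q,ψ)` are `ε`-close at scale `t` via `f,g`,
and `B(x,λt) ⊆ B(p,t)`, then `(M,x,φ)` and `(N,f x,ψ)` are `ε/λ`-close at scale `λt`. -/
theorem stmt8 {M N : Type*} [MetricSpace M] [MetricSpace N] {k : ℕ}
    (ε t lam : ℝ) (hε : 0 < ε) (hε' : ε < 1 / 10) (ht : 0 < t)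
    (hlam : 0 < lam) (hlam' : lam ≤ 1 / 2)
    (p : M) (φ : M → EuclideanSpace ℝ (Fin k))
    (q : N) (ψ : N → EuclideanSpace ℝ (Fin k)) (f : M → N) (g : N → M)
    (hfg : CloseWith ε t p φ q ψ f g)
    (x : M) (hx : ball x (lam * t) ⊆ ball p t) :
    Close (ε / lam) (lam * t) x φ (f x) ψ := by
  have hr : 10 * t < t / ε := by rw [lt_div_iff₀ hε]; nlinarith
  have hεt : ε * t < t / 10 := by nlinarith
  have hxp : dist x p < t := mem_ball.mp (hx (mem_ball_self (by positivity)))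
  have hfx := hfg.dist_map_basepoint_le (by positivity) (mem_ball.mpr (hxp.trans (by linarith)))
  have hrad : lam * t / (ε / lam) = lam ^ 2 * (t / ε) := by field_simp
  have hrad₂ : lam * t / (2 * (ε / lam)) = lam ^ 2 * (t / ε) / 2 := by field_simp
  have hhalf : t / (2 * ε) = t / ε / 2 := by field_simp
  have hlam₂ : lam ^ 2 * (t / ε) ≤ t / ε / 4 :=
    calc lam ^ 2 * (t / ε) ≤ (1 / 2) ^ 2 * (t / ε) := by gcongr
      _ = t / ε / 4 := by ring
  have hgfx : dist (g (f x)) x ≤ ε * t :=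
    hfg.2.2.2.2.2.1 x (mem_ball.mpr (by rw [hhalf]; linarith))
  refine ⟨f, g, hfg.of_ball_subset (by field_simp) ?_ ?_ ?_ ?_
    (by rw [dist_self]; positivity) hgfx⟩ <;>
    simp only [hrad, hrad₂, hhalf] <;> exact ball_subset_ball' (by linarith)
end

section
/- Let X be an L-linearly connected metric space (every two points x,y lie in a compact connected set of diameter at most L·d(x,y)) satisfying the following discrete chain condition for some μ ≥ 1: for all p ∈ X, r ∈ (0, diam X], and x, y in the annulus A(p, r, 2r), there is a finite set P = {x₀ = x, x₁, ..., xₙ = y} ⊆ A(p, r/μ, 2μr) with d(xᵢ, xᵢ₊₁) ≤ (1/2L)·dist(P, p) for each i. Then X is 2μ-annularly linearly connected: for all p ∈ X and r ∈ (0, diam X], any two points x, y ∈ A(p, r, 2r) can be joined by a continuum in A(p, r/2μ, 3μr). -/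
open Metric

/-- The closed annulus `A(p,r,R) = {z : r ≤ d(z,p) ≤ R}`. -/
def Annulus {X : Type*} [MetricSpace X] (p : X) (r R : ℝ) : Set X :=
  {z | r ≤ dist z p ∧ dist z p ≤ R}

/-- `X` is `L`-linearly connected: any two points lie in a compact connected set of
diameter at most `L` times their distance. -/
def LinearlyConnected (L : ℝ) (X : Type*) [MetricSpace X] : Prop :=
  ∀ x y : X, ∃ K : Set X, IsCompact K ∧ IsConnected K ∧ x ∈ K ∧ y ∈ K ∧
    diam K ≤ L * dist x y

/-!
Join consecutive points of the chain by the continua given by linear connectivity. Since the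
steps are at most `d / 2L`, where `d` is the distance from `p` to the chain, each of these continua
stays within `d / 2` of the chain, so its distance to `p` lies between `d / 2 ≥ r / 2μ` and
`2μr + d / 2 ≤ 3μr`.
-/

section Chain

variable {α : Type*} {n : ℕ} {z : Fin (n + 1) → α} {K : Fin n → Set α}

lemma mem_singleton_union_iUnion_of_chain (hsucc : ∀ i, z i.succ ∈ K i) (j : Fin (n + 1)) :
    z j ∈ {z 0} ∪ ⋃ i, K i := by
  cases j using Fin.cases with
  | zero => exact Or.inl rfl
  | succ i => exact Or.inr (Set.mem_iUnion_of_mem i (hsucc i))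

lemma isConnected_singleton_union_iUnion_of_chain [TopologicalSpace α]
    (hK : ∀ i, IsConnected (K i)) (hcastSucc : ∀ i, z i.castSucc ∈ K i) (hsucc : ∀ i, z i.succ ∈ K i) :
    IsConnected ({z 0} ∪ ⋃ i, K i) := by
  induction n with
  | zero => simpa using isConnected_singleton
  | succ n ih =>
    have hsucc' (i : Fin n) : z i.succ.castSucc ∈ K i.castSucc :=
      Fin.succ_castSucc i ▸ hsucc i.castSucc
    have hinit : IsConnected ({z 0} ∪ ⋃ i : Fin n, K i.castSucc) :=
      ih (z := z ∘ Fin.castSucc) (fun i => hK _) (fun i => hcastSucc _) hsucc'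
    have hlast : z (Fin.last n).castSucc ∈ {z 0} ∪ ⋃ i : Fin n, K i.castSucc :=
      mem_singleton_union_iUnion_of_chain (z := z ∘ Fin.castSucc) hsucc' (Fin.last n)
    rw [Set.iUnion_fin_add_one_eq_iUnion_castSucc, ← Set.union_assoc]
    exact IsConnected.union ⟨_, hlast, hcastSucc (Fin.last n)⟩ hinit (hK _)

end Chain

lemma annulus_mono {X : Type*} [MetricSpace X] {p : X} {r r' R R' : ℝ} (hr : r' ≤ r)
    (hR : R ≤ R') : Annulus p r R ⊆ Annulus p r' R' :=
  fun _ ⟨h₁, h₂⟩ => ⟨hr.trans h₁, h₂.trans hR⟩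

lemma iUnion_closedBall_subset_annulus {X ι : Type*} [MetricSpace X] {p : X} {r R ε : ℝ}
    {z : ι → X} (hz : ∀ j, z j ∈ Annulus p r R) :
    ⋃ j, closedBall (z j) ε ⊆ Annulus p (r - ε) (R + ε) := by
  simp only [Set.iUnion_subset_iff]
  intro j w hw
  rw [mem_closedBall] at hw
  have h₁ := dist_triangle_left (z j) p w
  have h₂ := dist_triangle w (z j) p
  exact ⟨by linarith [(hz j).1], by linarith [(hz j).2]⟩

lemma LinearlyConnected.exists_continuum_subset_iUnion_closedBall {L : ℝ} {X : Type*}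
    [MetricSpace X] (hlc : LinearlyConnected L X) {n : ℕ} (z : Fin (n + 1) → X) {ε : ℝ}
    (hε : 0 ≤ ε) (hstep : ∀ i : Fin n, L * dist (z i.castSucc) (z i.succ) ≤ ε) :
    ∃ C : Set X, IsCompact C ∧ IsConnected C ∧ z 0 ∈ C ∧ z (Fin.last n) ∈ C ∧
      C ⊆ ⋃ j, closedBall (z j) ε := by
  choose K hKc hKconn hKleft hKright hKdiam using fun i : Fin n => hlc (z i.castSucc) (z i.succ)
  have hmem := mem_singleton_union_iUnion_of_chain hKright
  refine ⟨{z 0} ∪ ⋃ i, K i, isCompact_singleton.union (isCompact_iUnion hKc),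
    isConnected_singleton_union_iUnion_of_chain hKconn hKleft hKright, hmem 0,
    hmem (Fin.last n), ?_⟩
  rintro w (rfl | hw)
  · exact Set.mem_iUnion_of_mem 0 (mem_closedBall_self hε)
  · obtain ⟨i, hwi⟩ := Set.mem_iUnion.1 hw
    refine Set.mem_iUnion_of_mem i.castSucc (mem_closedBall.2 ?_)
    calc dist w (z i.castSucc) ≤ diam (K i) :=
          dist_le_diam_of_mem (hKc i).isBounded hwi (hKleft i)
      _ ≤ ε := (hKdiam i).trans (hstep i)

theorem stmt10_general {X : Type*} [MetricSpace X]
    (L μ : ℝ)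
    (hlc : LinearlyConnected L X)
    (hchain : ∀ (p : X) (r : ℝ), 0 < r →
      ENNReal.ofReal r ≤ EMetric.diam (Set.univ : Set X) →
      ∀ x ∈ Annulus p r (2 * r), ∀ y ∈ Annulus p r (2 * r),
        ∃ (n : ℕ) (z : Fin (n + 1) → X),
          z 0 = x ∧ z (Fin.last n) = y ∧
          (∀ i, z i ∈ Annulus p (r / μ) (2 * μ * r)) ∧
          ∀ i : Fin n, dist (z i.castSucc) (z i.succ) ≤
            (1 / (2 * L)) * Metric.infDist p (Set.range z)) :
    ∀ (p : X) (r : ℝ), 0 < r →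
      ENNReal.ofReal r ≤ EMetric.diam (Set.univ : Set X) →
      ∀ x ∈ Annulus p r (2 * r), ∀ y ∈ Annulus p r (2 * r),
        ∃ C : Set X, IsCompact C ∧ IsConnected C ∧ x ∈ C ∧ y ∈ C ∧
          C ⊆ Annulus p (r / (2 * μ)) (3 * μ * r) := by
  intro p r hr hdiam x hx y hy
  obtain ⟨n, z, rfl, rfl, hzmem, hzstep⟩ := hchain p r hr hdiam x hx y hy
  set d := infDist p (Set.range z)
  have hd : 0 ≤ d := infDist_nonneg
  have hd_le : ∀ j, d ≤ dist (z j) p := fun j =>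
    dist_comm p (z j) ▸ infDist_le_dist_of_mem (Set.mem_range_self j)
  have hd_ge : r / μ ≤ d := (le_infDist (Set.range_nonempty z)).2 <| by
    rintro _ ⟨j, rfl⟩
    exact dist_comm (z j) p ▸ (hzmem j).1
  have hstep : ∀ i : Fin n, L * dist (z i.castSucc) (z i.succ) ≤ d / 2 := by
    intro i
    rcases le_or_gt L 0 with hL | hL
    · nlinarith [dist_nonneg (x := z i.castSucc) (y := z i.succ)]
    · calc L * dist (z i.castSucc) (z i.succ) ≤ L * (1 / (2 * L) * d) := by
            gcongr; exact hzstep i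
        _ = d / 2 := by field_simp
  obtain ⟨C, hCc, hCconn, h0, hlast, hCsub⟩ :=
    hlc.exists_continuum_subset_iUnion_closedBall z (by positivity) hstep
  refine ⟨C, hCc, hCconn, h0, hlast, hCsub.trans <|
    (iUnion_closedBall_subset_annulus fun j => ⟨hd_le j, (hzmem j).2⟩).trans <|
    annulus_mono ?_ ?_⟩
  · rw [mul_comm, ← div_div]
    linarith
  · linarith [hd_le 0, (hzmem 0).2]

/-- A linearly connected space satisfying a discrete chain condition in annuli is
annularly linearly connected. -/
theorem stmt10 {X : Type*} [MetricSpace X]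
    (L μ : ℝ) (hL : 1 ≤ L) (hμ : 1 ≤ μ)
    (hlc : LinearlyConnected L X)
    (hchain : ∀ (p : X) (r : ℝ), 0 < r →
      ENNReal.ofReal r ≤ EMetric.diam (Set.univ : Set X) →
      ∀ x ∈ Annulus p r (2 * r), ∀ y ∈ Annulus p r (2 * r),
        ∃ (n : ℕ) (z : Fin (n + 1) → X),
          z 0 = x ∧ z (Fin.last n) = y ∧
          (∀ i, z i ∈ Annulus p (r / μ) (2 * μ * r)) ∧
          ∀ i : Fin n, dist (z i.castSucc) (z i.succ) ≤
            (1 / (2 * L)) * Metric.infDist p (Set.range z)) :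
    ∀ (p : X) (r : ℝ), 0 < r →
      ENNReal.ofReal r ≤ EMetric.diam (Set.univ : Set X) →
      ∀ x ∈ Annulus p r (2 * r), ∀ y ∈ Annulus p r (2 * r),
        ∃ C : Set X, IsCompact C ∧ IsConnected C ∧ x ∈ C ∧ y ∈ C ∧
          C ⊆ Annulus p (r / (2 * μ)) (3 * μ * r) :=
  stmt10_general L μ hlc hchain
end

section
/- Let X be a proper metric space, F: X → Y an L-Lipschitz quotient mapping onto a geodesic space Y, and suppose F is injective on B(x, r). Then for any p, q ∈ B(x, r/(1+2L²)) and any geodesic γ from F(p) to F(q) in Y, the L-Lipschitz lift γ̃ of γ starting at p stays inside B(x, r) and ends at q. -/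
/-- If `F` is an `L`-LQ map, injective on `B(x,r)`, and `p, q ∈ B(x, r/(1+2L²))`, then the
`L`-Lipschitz lift (starting at `p`) of any unit-speed geodesic from `F p` to `F q` stays
in `B(x,r)` and ends at `q`. -/
theorem stmt18 {X Y : Type*} [MetricSpace X] [MetricSpace Y] [ProperSpace X]
    (hgeo : ∀ a b : Y, ∃ γ : ℝ → Y, γ 0 = a ∧ γ (dist a b) = b ∧
      ∀ s ∈ Set.Icc 0 (dist a b), ∀ t ∈ Set.Icc 0 (dist a b), dist (γ s) (γ t) = |s - t|)
    (L : ℝ) (hL : 1 ≤ L) (F : X → Y) (hF : IsLQ L F)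
    (x : X) (r : ℝ) (hr : 0 < r) (hinj : Set.InjOn F (Metric.ball x r))
    (p : X) (hp : p ∈ Metric.ball x (r / (1 + 2 * L ^ 2)))
    (q : X) (hq : q ∈ Metric.ball x (r / (1 + 2 * L ^ 2)))
    (T : ℝ) (hT : T = dist (F p) (F q))
    (γ : ℝ → Y) (hγ0 : γ 0 = F p) (hγT : γ T = F q)
    (hγ : ∀ s ∈ Set.Icc 0 T, ∀ t ∈ Set.Icc 0 T, dist (γ s) (γ t) = |s - t|)
    (γ' : ℝ → X) (hγ'0 : γ' 0 = p)
    (hγ'lip : ∀ s ∈ Set.Icc 0 T, ∀ t ∈ Set.Icc 0 T, dist (γ' s) (γ' t) ≤ L * dist s t)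
    (hlift : ∀ t ∈ Set.Icc 0 T, F (γ' t) = γ t) :
    (∀ t ∈ Set.Icc 0 T, γ' t ∈ Metric.ball x r) ∧ γ' T = q := by
  have hL0 : (0:ℝ) < L := lt_of_lt_of_le one_pos hL
  have hlipF : ∀ a b : X, dist (F a) (F b) ≤ L * dist a b := by
    intro a b
    rcases eq_or_ne a b with rfl | hab
    · simp
    · have hd : 0 < dist a b := dist_pos.2 hab
      have key : ∀ ε > (0:ℝ), dist (F a) (F b) ≤ L * dist a b + ε := by
        intro ε hε
        have hpos : 0 < dist a b + ε / L := by positivity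
        have h2 := (hF a (dist a b + ε / L) hpos).2
        have hmem : F b ∈ F '' Metric.ball a (dist a b + ε / L) :=
          ⟨b, by simp [Metric.mem_ball, dist_comm]; positivity, rfl⟩
        have := h2 hmem
        rw [Metric.mem_ball, dist_comm] at this
        have : dist (F a) (F b) < L * dist a b + ε := by
          have : dist (F a) (F b) < L * (dist a b + ε / L) := this
          rw [mul_add, mul_div_cancel₀ _ (ne_of_gt hL0)] at this
          exact this
        linarith
      exact le_of_forall_pos_le_add key
  have hden : (0:ℝ) < 1 + 2 * L ^ 2 := by positivity
  have hpx : dist p x < r / (1 + 2 * L ^ 2) := Metric.mem_ball.1 hp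
  have hqx : dist q x < r / (1 + 2 * L ^ 2) := Metric.mem_ball.1 hq
  have hdpq : dist p q < 2 * (r / (1 + 2 * L ^ 2)) := by
    calc dist p q ≤ dist p x + dist x q := dist_triangle _ _ _
    _ < _ := by rw [dist_comm x q]; linarith
  have hT0 : 0 ≤ T := hT ▸ dist_nonneg
  have hTle : T ≤ L * dist p q := hT ▸ hlipF p q
  have hball : ∀ t ∈ Set.Icc (0:ℝ) T, γ' t ∈ Metric.ball x r := by
    intro t ht
    have h0mem : (0:ℝ) ∈ Set.Icc (0:ℝ) T := ⟨le_refl _, hT0⟩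
    have h1 : dist (γ' t) (γ' 0) ≤ L * t := by
      have := hγ'lip t ht 0 h0mem
      simpa [Real.dist_eq, abs_of_nonneg ht.1] using this
    have h2 : L * t ≤ L * T := by nlinarith [ht.2]
    have h3 : L * T < L * L * (2 * (r / (1 + 2 * L ^ 2))) := by
      have hA := mul_lt_mul_of_pos_left hdpq (mul_pos hL0 hL0)
      nlinarith
    have h4 : L * L * (2 * (r / (1 + 2 * L ^ 2))) + r / (1 + 2 * L ^ 2) = r := by
      field_simp; ring
    have : dist (γ' t) x ≤ dist (γ' t) (γ' 0) + dist p x := by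
      rw [hγ'0]; exact dist_triangle _ _ _
    rw [Metric.mem_ball]
    linarith
  refine ⟨hball, ?_⟩
  have hTmem : T ∈ Set.Icc (0:ℝ) T := ⟨hT0, le_refl _⟩
  have hq' : q ∈ Metric.ball x r := by
    rw [Metric.mem_ball]
    have : r / (1 + 2 * L ^ 2) ≤ r := by
      rw [div_le_iff₀ hden]; nlinarith
    linarith
  exact hinj (hball T hTmem) hq' (by rw [hlift T hTmem, hγT])
end
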